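/- arXiv:1005.2967 — 3 statements merged into one kernel-verified Lean document; each statement's English description precedes it below -/
import Mathlib

section
/- Let G = (V, E) be a connected undirected graph on N ≥ 2 vertices, c : E → ℝ with c_{ij} > 0, x : E → ℝ, and for each vertex i let x̂_i = (∑_{j∈N_i} c_{ij} x_{ij})/(∑_{j∈N_i} c_{ij}) and ΔV_i = ∑_{j∈N_i} c_{ij} (x_{ij} − x̂_i)². If ΔV_i = 0 for every vertex i, then x is constant on E, i.e., there exists x* with x_e = x* for all e ∈ E. -/
/-- If all local Lyapunov drops vanish on a connected graph, then the
edge values are all equal to a common constant. -/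
theorem stmt8 {V : Type*} [Fintype V] [DecidableEq V] (G : SimpleGraph V)
    [DecidableRel G.Adj] (hconn : G.Connected) (hN : 2 ≤ Fintype.card V)
    (c x : V → V → ℝ)
    (hcsymm : ∀ i j, c i j = c j i) (hxsymm : ∀ i j, x i j = x j i)
    (hc : ∀ i j, G.Adj i j → 0 < c i j)
    (xhat : V → ℝ)
    (hxhat : ∀ i, xhat i =
      (∑ j ∈ G.neighborFinset i, c i j * x i j) / (∑ j ∈ G.neighborFinset i, c i j))
    (hΔ : ∀ i, ∑ j ∈ G.neighborFinset i, c i j * (x i j - xhat i) ^ 2 = 0) :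
    ∃ xstar : ℝ, ∀ i j, G.Adj i j → x i j = xstar := by
  have key : ∀ i j, G.Adj i j → x i j = xhat i := by
    intro i j hadj
    have hnn : ∀ k ∈ G.neighborFinset i, 0 ≤ c i k * (x i k - xhat i) ^ 2 := by
      intro k hk
      have := hc i k ((SimpleGraph.mem_neighborFinset G i k).mp hk)
      positivity
    have := (Finset.sum_eq_zero_iff_of_nonneg hnn).mp (hΔ i) j
      ((SimpleGraph.mem_neighborFinset G i j).mpr hadj)
    have hcpos := hc i j hadj
    have h2 : (x i j - xhat i) ^ 2 = 0 := by
      rcases mul_eq_zero.mp this with h | h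
      · exact absurd h hcpos.ne'
      · exact h
    have := pow_eq_zero_iff (n := 2) (by norm_num) |>.mp h2
    linarith
  have hedge : ∀ i j, G.Adj i j → xhat i = xhat j := by
    intro i j hadj
    rw [← key i j hadj, hxsymm, key j i hadj.symm]
  have hconst : ∀ i j, xhat i = xhat j := by
    intro i j
    obtain ⟨w⟩ := hconn i j
    induction w with
    | nil => rfl
    | cons h p ih => exact (hedge _ _ h).trans ih
  obtain ⟨v⟩ := hconn.nonempty
  refine ⟨xhat v, fun i j hadj => ?_⟩
  rw [key i j hadj, hconst i v]
end

section
/- Let G = (V,E) be a connected graph on N ≥ 2 vertices with c_{ij} = 1/|N_i| + 1/|N_j| and b_i = (1/2)∑_{j∈N_i} c_{ij}. Then for every edge {i,j} ∈ E, 1 ≤ (b_i + b_j)/c_{ij} ≤ (N² − 2N + 2)/2. -/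
/-!
Write `d u` for the degree of `u`. Since the `d u` terms `1 / d u` of `2 b u` sum to `1`,
`2 b u = 1 + ∑_{k ~ u} 1 / d k`. For an edge `uv` the term `k = v` alone gives
`b u + b v ≥ 1 + c u v / 2 ≥ c u v`, while bounding every other term by `1` gives
`b u + b v ≤ (c u v + d u + d v) / 2 = (1 + d u * d v) / 2 * c u v`,
and `d u, d v ≤ N - 1`.
-/

open Finset

namespace SimpleGraph

variable {V : Type*} [Fintype V] (G : SimpleGraph V) [DecidableRel G.Adj]

noncomputable def edgeWeight (u v : V) : ℝ :=
  1 / (G.degree u : ℝ) + 1 / (G.degree v : ℝ)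

noncomputable def vertexWeight (u : V) : ℝ :=
  (1 / 2) * ∑ k ∈ G.neighborFinset u, G.edgeWeight u k

variable {G}

lemma degree_pos_of_adj {u v : V} (h : G.Adj u v) : 0 < G.degree u :=
  (G.degree_pos_iff_exists_adj u).2 ⟨v, h⟩

lemma one_le_degree_of_adj {u v : V} (h : G.Adj u v) : (1 : ℝ) ≤ G.degree u := by
  exact_mod_cast degree_pos_of_adj h

lemma inv_degree_le_one_of_adj {u v : V} (h : G.Adj u v) : 1 / (G.degree u : ℝ) ≤ 1 :=
  div_le_one_of_le₀ (one_le_degree_of_adj h) (Nat.cast_nonneg _)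

lemma degree_le_card_sub_one (u : V) : (G.degree u : ℝ) ≤ Fintype.card V - 1 := by
  have := G.degree_lt_card_verts u
  rw [le_sub_iff_add_le]
  exact_mod_cast this

lemma edgeWeight_pos_of_adj {u v : V} (h : G.Adj u v) : 0 < G.edgeWeight u v := by
  have := one_le_degree_of_adj h
  have := one_le_degree_of_adj h.symm
  unfold edgeWeight
  positivity

lemma vertexWeight_eq {u : V} (hu : G.degree u ≠ 0) :
    G.vertexWeight u = (1 + ∑ k ∈ G.neighborFinset u, 1 / (G.degree k : ℝ)) / 2 := by
  have hsum : ∑ _k ∈ G.neighborFinset u, 1 / (G.degree u : ℝ) = 1 := by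
    rw [sum_const, card_neighborFinset_eq_degree, nsmul_eq_mul]
    field_simp
  simp only [vertexWeight, edgeWeight, sum_add_distrib, hsum]
  ring

lemma inv_degree_le_sum_inv_degree_neighbor {u v : V} (h : G.Adj u v) :
    1 / (G.degree v : ℝ) ≤ ∑ k ∈ G.neighborFinset u, 1 / (G.degree k : ℝ) :=
  single_le_sum (f := fun k ↦ 1 / (G.degree k : ℝ)) (fun _ _ ↦ by positivity)
    ((G.mem_neighborFinset u v).2 h)

lemma sum_inv_degree_neighbor_le {u v : V} (h : G.Adj u v) :
    ∑ k ∈ G.neighborFinset u, 1 / (G.degree k : ℝ) ≤ 1 / (G.degree v : ℝ) + (G.degree u - 1) := by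
  classical
  have hv : v ∈ G.neighborFinset u := (G.mem_neighborFinset u v).2 h
  have hrest : ∑ k ∈ (G.neighborFinset u).erase v, 1 / (G.degree k : ℝ) ≤ G.degree u - 1 := by
    have hcard : ((((G.neighborFinset u).erase v).card : ℕ) : ℝ) = G.degree u - 1 := by
      rw [card_erase_of_mem hv, card_neighborFinset_eq_degree,
        Nat.cast_pred (degree_pos_of_adj h)]
    calc ∑ k ∈ (G.neighborFinset u).erase v, 1 / (G.degree k : ℝ)
        ≤ ((G.neighborFinset u).erase v).card • (1 : ℝ) :=
          sum_le_card_nsmul _ _ _ fun k hk ↦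
            inv_degree_le_one_of_adj ((G.mem_neighborFinset u k).1 (mem_of_mem_erase hk)).symm
      _ = G.degree u - 1 := by rw [nsmul_one, hcard]
  rw [← add_sum_erase _ _ hv]
  exact add_le_add_right hrest _

lemma edgeWeight_le_vertexWeight_add {u v : V} (h : G.Adj u v) :
    G.edgeWeight u v ≤ G.vertexWeight u + G.vertexWeight v := by
  rw [vertexWeight_eq (degree_pos_of_adj h).ne', vertexWeight_eq (degree_pos_of_adj h.symm).ne',
    edgeWeight]
  linarith [inv_degree_le_sum_inv_degree_neighbor h, inv_degree_le_sum_inv_degree_neighbor h.symm,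
    inv_degree_le_one_of_adj h, inv_degree_le_one_of_adj h.symm]

lemma vertexWeight_add_le {u v : V} (h : G.Adj u v) :
    G.vertexWeight u + G.vertexWeight v ≤ (1 + G.degree u * G.degree v) / 2 * G.edgeWeight u v := by
  have hu := one_le_degree_of_adj h
  have hv := one_le_degree_of_adj h.symm
  have hexpand : (1 + G.degree u * G.degree v) / 2 * G.edgeWeight u v
      = (G.edgeWeight u v + G.degree u + G.degree v) / 2 := by
    rw [edgeWeight]
    field_simp
    ring
  rw [hexpand, vertexWeight_eq (degree_pos_of_adj h).ne',
    vertexWeight_eq (degree_pos_of_adj h.symm).ne', edgeWeight]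
  linarith [sum_inv_degree_neighbor_le h, sum_inv_degree_neighbor_le h.symm]

lemma one_add_degree_mul_degree_le (u v : V) :
    1 + (G.degree u : ℝ) * G.degree v ≤ (Fintype.card V : ℝ) ^ 2 - 2 * Fintype.card V + 2 := by
  have hu := degree_le_card_sub_one (G := G) u
  have hv := degree_le_card_sub_one (G := G) v
  nlinarith [mul_le_mul hu hv (Nat.cast_nonneg _) (hu.trans' (Nat.cast_nonneg _))]

end SimpleGraph

open SimpleGraph in
theorem stmt12_general {V : Type*} [Fintype V] (G : SimpleGraph V) [DecidableRel G.Adj]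
    (c : V → V → ℝ)
    (hc : ∀ i j, c i j = 1 / (G.degree i : ℝ) + 1 / (G.degree j : ℝ))
    (b : V → ℝ)
    (hb : ∀ i, b i = (1 / 2) * ∑ j ∈ G.neighborFinset i, c i j) :
    ∀ i j, G.Adj i j →
      1 ≤ (b i + b j) / c i j ∧
      (b i + b j) / c i j ≤ ((Fintype.card V : ℝ) ^ 2 - 2 * (Fintype.card V : ℝ) + 2) / 2 := by
  obtain rfl : c = G.edgeWeight := funext₂ hc
  obtain rfl : b = G.vertexWeight := funext hb
  intro i j h
  have hpos := edgeWeight_pos_of_adj h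
  refine ⟨(one_le_div hpos).2 (edgeWeight_le_vertexWeight_add h), (div_le_iff₀ hpos).2 ?_⟩
  calc G.vertexWeight i + G.vertexWeight j
      ≤ (1 + G.degree i * G.degree j) / 2 * G.edgeWeight i j := vertexWeight_add_le h
    _ ≤ _ := by
      gcongr ?_ / 2 * _
      exact one_add_degree_mul_degree_le i j

theorem stmt12 {V : Type*} [Fintype V] (G : SimpleGraph V) [DecidableRel G.Adj]
    (hconn : G.Connected) (hN : 2 ≤ Fintype.card V)
    (c : V → V → ℝ)
    (hc : ∀ i j, c i j = 1 / (G.degree i : ℝ) + 1 / (G.degree j : ℝ))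
    (b : V → ℝ)
    (hb : ∀ i, b i = (1 / 2) * ∑ j ∈ G.neighborFinset i, c i j) :
    ∀ i j, G.Adj i j →
      1 ≤ (b i + b j) / c i j ∧
      (b i + b j) / c i j ≤ ((Fintype.card V : ℝ) ^ 2 - 2 * (Fintype.card V : ℝ) + 2) / 2 :=
  stmt12_general G c hc b hb
end

section
/- Let b : V → ℝ be positive with ∑_{i∈V} b_i = N, on a graph G = (V,E) with |V| = N and |E| = L, where b_i ≥ (1/2)(1 + 1/(N−1)) for each i. Then β := ∑_{i∈V} ∑_{j∈N_i∪{i}} b_i b_j satisfies N + (L/2)(1 + 1/(N−1))² ≤ β ≤ N². -/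
/-!
Split `β` into the diagonal part `∑ bᵢ²` and the part over ordered pairs of adjacent vertices.
Since `∑ bᵢ = N`, Cauchy–Schwarz gives `∑ bᵢ² ≥ N`; each of the `2L` ordered adjacent pairs
contributes `bᵢ bⱼ ≥ c²` with `c = (1 + 1/(N-1))/2`. For the upper bound, `β` is a subsum of the
nonnegative expansion of `(∑ bᵢ)² = N²`.
-/

open Finset

section

variable {ι : Type*} [Fintype ι]

lemma card_le_sum_sq_of_sum_eq_card (b : ι → ℝ) (hsum : ∑ i, b i = Fintype.card ι) :
    (Fintype.card ι : ℝ) ≤ ∑ i, b i ^ 2 := by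
  have hcs : (∑ i, b i) ^ 2 ≤ Fintype.card ι * ∑ i, b i ^ 2 := by
    simpa using sq_sum_le_card_mul_sum_sq (s := univ) (f := b)
  rw [hsum] at hcs
  have hsq : 0 ≤ ∑ i, b i ^ 2 := sum_nonneg fun i _ => sq_nonneg (b i)
  nlinarith [(Fintype.card ι).cast_nonneg (α := ℝ)]

lemma sum_sum_mul_le_sq_sum (s : ι → Finset ι) (b : ι → ℝ) (hb : ∀ i, 0 ≤ b i) :
    ∑ i, ∑ j ∈ s i, b i * b j ≤ (∑ i, b i) ^ 2 := by
  calc ∑ i, ∑ j ∈ s i, b i * b j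
      ≤ ∑ i, ∑ j, b i * b j :=
        sum_le_sum fun i _ => sum_le_sum_of_subset_of_nonneg (subset_univ _)
          fun j _ _ => mul_nonneg (hb i) (hb j)
    _ = (∑ i, b i) ^ 2 := by rw [sq, sum_mul_sum]

end

namespace SimpleGraph

variable {V : Type*} (G : SimpleGraph V)

lemma sum_insert_neighborFinset {v : V} {M : Type*} [AddCommMonoid M] [DecidableEq V]
    [Fintype (G.neighborSet v)] (f : V → M) :
    ∑ j ∈ insert v (G.neighborFinset v), f j = f v + ∑ j ∈ G.neighborFinset v, f j :=
  sum_insert (G.notMem_neighborFinset_self v)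

lemma two_mul_card_edgeFinset_mul_sq_le_sum_adj [Fintype V] [DecidableRel G.Adj]
    {b : V → ℝ} {c : ℝ} (hc : 0 ≤ c) (hb : ∀ i, c ≤ b i) :
    2 * #G.edgeFinset * c ^ 2 ≤ ∑ i, ∑ j ∈ G.neighborFinset i, b i * b j := by
  have hdeg : ∀ i, G.degree i * c ^ 2 ≤ ∑ j ∈ G.neighborFinset i, b i * b j := fun i => by
    simpa [sq] using card_nsmul_le_sum (G.neighborFinset i) (fun j => b i * b j) (c * c)
      fun j _ => mul_le_mul (hb i) (hb j) hc (hc.trans (hb i))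
  calc 2 * (#G.edgeFinset : ℝ) * c ^ 2 = ∑ i, G.degree i * c ^ 2 := by
        rw [← sum_mul, ← Nat.cast_sum, G.sum_degrees_eq_twice_card_edges]; push_cast; ring
    _ ≤ _ := sum_le_sum fun i _ => hdeg i

end SimpleGraph

theorem stmt13 {V : Type*} [Fintype V] [DecidableEq V] (G : SimpleGraph V)
    [DecidableRel G.Adj] (hN : 2 ≤ Fintype.card V)
    (b : V → ℝ) (hb : ∀ i, 0 < b i) (hsum : ∑ i, b i = (Fintype.card V : ℝ))
    (hlb : ∀ i, (1 / 2) * (1 + 1 / ((Fintype.card V : ℝ) - 1)) ≤ b i) :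
    (Fintype.card V : ℝ)
        + ((G.edgeFinset.card : ℝ) / 2) * (1 + 1 / ((Fintype.card V : ℝ) - 1)) ^ 2
      ≤ ∑ i, ∑ j ∈ insert i (G.neighborFinset i), b i * b j ∧
    ∑ i, ∑ j ∈ insert i (G.neighborFinset i), b i * b j ≤ (Fintype.card V : ℝ) ^ 2 := by
  have hN' : (2 : ℝ) ≤ Fintype.card V := by exact_mod_cast hN
  set N : ℝ := (Fintype.card V : ℝ)
  have hc : 0 ≤ (1 / 2) * (1 + 1 / (N - 1)) := by
    have : 0 ≤ N - 1 := by linarith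
    positivity
  refine ⟨?_, ?_⟩
  · calc N + (#G.edgeFinset / 2) * (1 + 1 / (N - 1)) ^ 2
        = N + 2 * #G.edgeFinset * ((1 / 2) * (1 + 1 / (N - 1))) ^ 2 := by ring
      _ ≤ ∑ i, b i ^ 2 + ∑ i, ∑ j ∈ G.neighborFinset i, b i * b j :=
        add_le_add (card_le_sum_sq_of_sum_eq_card b hsum)
          (G.two_mul_card_edgeFinset_mul_sq_le_sum_adj hc hlb)
      _ = _ := by simp only [G.sum_insert_neighborFinset, sum_add_distrib, sq]
  · calc _ ≤ (∑ i, b i) ^ 2 := sum_sum_mul_le_sq_sum _ b fun i => (hb i).le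
      _ = N ^ 2 := by rw [hsum]
end
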